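/- arXiv:1102.0509 — 5 statements merged into one kernel-verified Lean document; each statement's English description precedes it below -/
import Mathlib

section
/- For every subgroup H of a finite group G, (|L(H)|²/|L(G)|²)·ssd(H) ≤ ssd(G). -/
noncomputable def ssd (G : Type*) [Group G] : ℝ :=
  (Nat.card {p : Subgroup G × Subgroup G // ⁅p.1, p.2⁆ = ⊥} : ℝ) /
    (Nat.card (Subgroup G) : ℝ) ^ 2

lemma card_commuting_pairs_le_of_injective {G K : Type*} [Group G] [Group K] [Finite G]
    {f : K →* G} (hf : Function.Injective f) :
    Nat.card {p : Subgroup K × Subgroup K // ⁅p.1, p.2⁆ = ⊥} ≤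
      Nat.card {p : Subgroup G × Subgroup G // ⁅p.1, p.2⁆ = ⊥} := by
  have hmap : Function.Injective (Subgroup.map f) := Subgroup.map_injective hf
  refine Nat.card_le_card_of_injective
    (fun p => ⟨(p.1.1.map f, p.1.2.map f), by
      rw [← Subgroup.map_commutator, p.2, Subgroup.map_bot]⟩) ?_
  rintro ⟨⟨A, B⟩, _⟩ ⟨⟨A', B'⟩, _⟩ h
  simp only [Subtype.mk.injEq, Prod.mk.injEq] at h
  exact Subtype.ext (Prod.ext (hmap h.1) (hmap h.2))

lemma ssd_mul_card_sq (G : Type*) [Group G] [Finite G] :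
    ssd G * (Nat.card (Subgroup G) : ℝ) ^ 2 =
      Nat.card {p : Subgroup G × Subgroup G // ⁅p.1, p.2⁆ = ⊥} := by
  have hpos : 0 < (Nat.card (Subgroup G) : ℝ) := by exact_mod_cast Nat.card_pos
  unfold ssd
  field_simp

theorem ssd_subgroup_le (G : Type*) [Group G] [Finite G] (H : Subgroup G) :
    (Nat.card (Subgroup H) : ℝ) ^ 2 / (Nat.card (Subgroup G) : ℝ) ^ 2 * ssd H ≤
      ssd G := by
  calc (Nat.card (Subgroup H) : ℝ) ^ 2 / (Nat.card (Subgroup G) : ℝ) ^ 2 * ssd H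
      = (Nat.card {p : Subgroup H × Subgroup H // ⁅p.1, p.2⁆ = ⊥} : ℝ) /
          (Nat.card (Subgroup G) : ℝ) ^ 2 := by
        rw [← ssd_mul_card_sq H]
        ring
    _ ≤ ssd G := by
        unfold ssd
        gcongr
        exact card_commuting_pairs_le_of_injective H.subtype_injective
end

section
/- If G₁ and G₂ are finite groups of coprime orders, then ssd(G₁ × G₂) = ssd(G₁) · ssd(G₂). -/
open Subgroup
set_option linter.unusedSectionVars false

section Coprime

variable {G₁ G₂ : Type*} [Group G₁] [Group G₂] [Finite G₁] [Finite G₂]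

lemma aux_mem_of_mem (h : Nat.Coprime (Nat.card G₁) (Nat.card G₂)) (a : G₁) (b : G₂) (H : Subgroup (G₁ × G₂))
    (hab : (a, b) ∈ H) : (a, 1) ∈ H ∧ (1, b) ∈ H := by
  have hco : Nat.Coprime (orderOf a) (orderOf b) :=
    Nat.Coprime.coprime_dvd_left (orderOf_dvd_natCard a)
      (Nat.Coprime.coprime_dvd_right (orderOf_dvd_natCard b) h)
  obtain ⟨e, he1, he0⟩ := Nat.chineseRemainder hco 1 0
  have h1 : (a, b) ^ e = (a, 1) := by
    have ha : a ^ e = a := by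
      have := (pow_eq_pow_iff_modEq (x := a) (n := e) (m := 1)).mpr (by simpa using he1)
      simpa using this
    have hb : b ^ e = 1 := by
      rw [← pow_zero b, pow_eq_pow_iff_modEq]; simpa using he0
    simp [Prod.pow_mk, ha, hb]
  constructor
  · rw [← h1]; exact pow_mem hab e
  · have : (1, b) = (a, 1)⁻¹ * (a, b) := by simp
    rw [this, ← h1]
    exact mul_mem (inv_mem (pow_mem hab e)) hab

lemma aux_eq_prod (h : Nat.Coprime (Nat.card G₁) (Nat.card G₂)) (H : Subgroup (G₁ × G₂)) :
    H = (H.map (MonoidHom.fst G₁ G₂)).prod (H.map (MonoidHom.snd G₁ G₂)) := by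
  apply le_antisymm
  · rintro ⟨a, b⟩ hab
    exact ⟨⟨(a, b), hab, rfl⟩, ⟨(a, b), hab, rfl⟩⟩
  · rintro ⟨a, b⟩ ⟨⟨⟨a', b'⟩, hx, hx1⟩, ⟨⟨a'', b''⟩, hy, hy1⟩⟩
    simp only at hx1 hy1
    subst hx1; subst hy1
    have h1 := (aux_mem_of_mem h a' b' H hx).1
    have h2 := (aux_mem_of_mem h a'' b'' H hy).2
    show (a', b'') ∈ H
    have : (a', b'') = (a', 1) * (1, b'') := by simp
    rw [this]; exact mul_mem h1 h2

/-- The subgroup lattice of a product of groups of coprime order. -/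
noncomputable def subgroupProdEquiv (h : Nat.Coprime (Nat.card G₁) (Nat.card G₂)) :
    Subgroup (G₁ × G₂) ≃ Subgroup G₁ × Subgroup G₂ where
  toFun H := (H.map (MonoidHom.fst G₁ G₂), H.map (MonoidHom.snd G₁ G₂))
  invFun p := p.1.prod p.2
  left_inv H := (aux_eq_prod h H).symm
  right_inv := by
    rintro ⟨A, B⟩
    simp only [Prod.mk.injEq]
    constructor
    · ext a
      constructor
      · rintro ⟨⟨x, y⟩, ⟨hx, hy⟩, rfl⟩; exact hx
      · intro ha; exact ⟨(a, 1), ⟨ha, one_mem B⟩, rfl⟩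
    · ext b
      constructor
      · rintro ⟨⟨x, y⟩, ⟨hx, hy⟩, rfl⟩; exact hy
      · intro hb; exact ⟨(1, b), ⟨one_mem A, hb⟩, rfl⟩

lemma aux_commutator_bot_iff (h : Nat.Coprime (Nat.card G₁) (Nat.card G₂)) (H K : Subgroup (G₁ × G₂)) :
    ⁅H, K⁆ = ⊥ ↔
      (⁅H.map (MonoidHom.fst G₁ G₂), K.map (MonoidHom.fst G₁ G₂)⁆ = ⊥ ∧
        ⁅H.map (MonoidHom.snd G₁ G₂), K.map (MonoidHom.snd G₁ G₂)⁆ = ⊥) := by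
  conv_lhs => rw [aux_eq_prod h H, aux_eq_prod h K]
  rw [commutator_prod_prod, prod_eq_bot_iff]

end Coprime

theorem ssd_prod_of_coprime (G₁ G₂ : Type*) [Group G₁] [Group G₂]
    [Finite G₁] [Finite G₂] (h : Nat.Coprime (Nat.card G₁) (Nat.card G₂)) :
    ssd (G₁ × G₂) = ssd G₁ * ssd G₂ := by
  let e := subgroupProdEquiv h
  have hD : Nat.card (Subgroup (G₁ × G₂)) =
      Nat.card (Subgroup G₁) * Nat.card (Subgroup G₂) := by
    rw [Nat.card_congr e, Nat.card_prod]
  have eN : {p : Subgroup (G₁ × G₂) × Subgroup (G₁ × G₂) // ⁅p.1, p.2⁆ = ⊥} ≃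
      ({p : Subgroup G₁ × Subgroup G₁ // ⁅p.1, p.2⁆ = ⊥} ×
       {p : Subgroup G₂ × Subgroup G₂ // ⁅p.1, p.2⁆ = ⊥}) := by
    refine (Equiv.subtypeEquiv ((e.prodCongr e).trans
      (Equiv.prodProdProdComm _ _ _ _)) ?_).trans Equiv.subtypeProdEquivProd
    rintro ⟨H, K⟩
    simpa [e, subgroupProdEquiv] using aux_commutator_bot_iff h H K
  have hN : Nat.card {p : Subgroup (G₁ × G₂) × Subgroup (G₁ × G₂) // ⁅p.1, p.2⁆ = ⊥} =
      Nat.card {p : Subgroup G₁ × Subgroup G₁ // ⁅p.1, p.2⁆ = ⊥} *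
      Nat.card {p : Subgroup G₂ × Subgroup G₂ // ⁅p.1, p.2⁆ = ⊥} := by
    rw [Nat.card_congr eN, Nat.card_prod]
  unfold ssd
  rw [hN, hD]
  push_cast
  ring
end

section
/- For finitely many finite groups G₁, …, G_m of pairwise coprime orders, ssd(G₁ × ⋯ × G_m) = ssd(G₁)·ssd(G₂)·⋯·ssd(G_m). -/
theorem pow_pow_totient_eq_self_of_coprime {M : Type*} [LeftCancelMonoid M] {g : M} {c n : ℕ}
    (hg : orderOf g ∣ c) (hn : n.Coprime c) : g ^ n ^ c.totient = g := by
  conv_rhs => rw [← pow_one g]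
  exact pow_eq_pow_iff_modEq.mpr ((Nat.ModEq.pow_totient hn).of_dvd hg)

namespace Subgroup

variable {ι : Type*} {G : ι → Type*} [∀ i, Group (G i)]

theorem map_evalMonoidHom_pi (K : ∀ i, Subgroup (G i)) (i : ι) :
    (pi Set.univ K).map (Pi.evalMonoidHom G i) = K i := by
  classical
  ext x
  constructor
  · rintro ⟨y, hy, rfl⟩
    exact hy i (Set.mem_univ i)
  · intro hx
    exact ⟨Pi.mulSingle i x, (mulSingle_mem_pi i x).mpr fun _ => hx, Pi.mulSingle_eq_same i x⟩

theorem commutator_pi_eq_bot_iff [Finite ι] (K L : ∀ i, Subgroup (G i)) :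
    ⁅pi Set.univ K, pi Set.univ L⁆ = ⊥ ↔ ∀ i, ⁅K i, L i⁆ = ⊥ := by
  rw [commutator_pi_pi_of_finite, pi_eq_bot_iff]

variable [∀ i, Finite (G i)]

theorem mulSingle_mem_of_pairwise_coprime [Fintype ι] [DecidableEq ι]
    (hG : Pairwise fun i j => (Nat.card (G i)).Coprime (Nat.card (G j)))
    {H : Subgroup (∀ i, G i)} {x : ∀ i, G i} (hx : x ∈ H) (i : ι) :
    Pi.mulSingle i (x i) ∈ H := by
  set n := ∏ j ∈ Finset.univ.erase i, Nat.card (G j)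
  have hn : n.Coprime (Nat.card (G i)) :=
    Nat.Coprime.prod_left fun j hj => hG (Finset.ne_of_mem_erase hj)
  suffices x ^ n ^ (Nat.card (G i)).totient = Pi.mulSingle i (x i) from
    this ▸ H.pow_mem hx _
  funext j
  rw [Pi.pow_apply]
  rcases eq_or_ne j i with rfl | hji
  · rw [Pi.mulSingle_eq_same]
    exact pow_pow_totient_eq_self_of_coprime (_root_.orderOf_dvd_natCard _) hn
  · rw [Pi.mulSingle_eq_of_ne hji, ← orderOf_dvd_iff_pow_eq_one]
    calc orderOf (x j) ∣ Nat.card (G j) := _root_.orderOf_dvd_natCard _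
      _ ∣ n := Finset.dvd_prod_of_mem _ (Finset.mem_erase.mpr ⟨hji, Finset.mem_univ j⟩)
      _ ∣ n ^ (Nat.card (G i)).totient := dvd_pow_self n (Nat.totient_pos.mpr Nat.card_pos).ne'

theorem pi_map_evalMonoidHom_of_pairwise_coprime [Fintype ι]
    (hG : Pairwise fun i j => (Nat.card (G i)).Coprime (Nat.card (G j)))
    (H : Subgroup (∀ i, G i)) :
    pi Set.univ (fun i => H.map (Pi.evalMonoidHom G i)) = H := by
  classical
  refine le_antisymm (fun x hx => pi_mem_of_mulSingle_mem x fun i => ?_)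
    fun x hx i _ => ⟨x, hx, rfl⟩
  obtain ⟨y, hy, hyx⟩ := hx i (Set.mem_univ i)
  rw [← hyx]
  exact mulSingle_mem_of_pairwise_coprime hG hy i

noncomputable def piEquivOfPairwiseCoprime [Fintype ι]
    (hG : Pairwise fun i j => (Nat.card (G i)).Coprime (Nat.card (G j))) :
    Subgroup (∀ i, G i) ≃ ∀ i, Subgroup (G i) where
  toFun H i := H.map (Pi.evalMonoidHom G i)
  invFun K := pi Set.univ K
  left_inv := pi_map_evalMonoidHom_of_pairwise_coprime hG
  right_inv K := funext (map_evalMonoidHom_pi K)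

theorem card_commutator_eq_bot_pi_of_pairwise_coprime [Fintype ι]
    (hG : Pairwise fun i j => (Nat.card (G i)).Coprime (Nat.card (G j))) :
    Nat.card {p : Subgroup (∀ i, G i) × Subgroup (∀ i, G i) // ⁅p.1, p.2⁆ = ⊥} =
      ∏ i, Nat.card {p : Subgroup (G i) × Subgroup (G i) // ⁅p.1, p.2⁆ = ⊥} := by
  let e := piEquivOfPairwiseCoprime hG
  have hcomm (p : Subgroup (∀ i, G i) × Subgroup (∀ i, G i)) :
      ⁅p.1, p.2⁆ = ⊥ ↔ ∀ i, ⁅e p.1 i, e p.2 i⁆ = ⊥ := by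
    rw [← e.symm_apply_apply p.1, ← e.symm_apply_apply p.2, Equiv.apply_symm_apply,
      Equiv.apply_symm_apply]
    exact commutator_pi_eq_bot_iff _ _
  rw [← Nat.card_pi]
  exact Nat.card_congr <|
    (((e.prodCongr e).trans (Equiv.arrowProdEquivProdArrow ι _ _).symm).subtypeEquiv hcomm).trans
      Equiv.subtypePiEquivPi

end Subgroup

theorem ssd_pi_of_pairwise_coprime (m : ℕ) (G : Fin m → Type*)
    [∀ i, Group (G i)] [∀ i, Finite (G i)]
    (h : ∀ i j, i ≠ j → Nat.Coprime (Nat.card (G i)) (Nat.card (G j))) :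
    ssd (∀ i, G i) = ∏ i, ssd (G i) := by
  simp only [ssd, Subgroup.card_commutator_eq_bot_pi_of_pairwise_coprime h,
    Nat.card_congr (Subgroup.piEquivOfPairwiseCoprime h), Nat.card_pi]
  push_cast
  rw [Finset.prod_div_distrib, Finset.prod_pow]
end

section
/- Let C and D be finite groups of coprime orders, A ≤ C and B ≤ D. Then for every n ≥ 1, ssd^(n)(A × B, C × D) = ssd^(n)(A,C) · ssd^(n)(B,D). -/
/-- Iterated commutator subgroup `[[…[[L₀,L₁],L₂]…],Lₙ]`. -/
def itCommS {G : Type*} [Group G] (n : ℕ) (L : Fin (n + 1) → Subgroup G) : Subgroup G :=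
  Fin.foldl n (fun A i => ⁅A, L i.succ⁆) (L 0)

/-- Multiple strong subgroup commutativity degree `ssd⁽ⁿ⁾(G,G)`. -/
noncomputable def ssdn (G : Type*) [Group G] (n : ℕ) : ℝ :=
  (Nat.card {L : Fin (n + 1) → Subgroup G // itCommS n L = ⊥} : ℝ) /
    (Nat.card (Subgroup G) : ℝ) ^ (n + 1)

/-- Multiple strong subgroup commutativity degree `ssd⁽ⁿ⁾(H,G)` for a subgroup `H ≤ G`. -/
noncomputable def ssdRel {G : Type*} [Group G] (n : ℕ) (H : Subgroup G) : ℝ :=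
  (Nat.card {p : (Fin n → {X : Subgroup G // X ≤ H}) × Subgroup G //
      itCommS n (Fin.snoc (fun i => ((p.1 i : Subgroup G))) p.2) = ⊥} : ℝ) /
    ((Nat.card {X : Subgroup G // X ≤ H} : ℝ) ^ n * (Nat.card (Subgroup G) : ℝ))

section Aux

variable {C D : Type*} [Group C] [Group D]

lemma aux_mem_left [Finite C] [Finite D] (h : Nat.Coprime (Nat.card C) (Nat.card D))
    {K : Subgroup (C × D)} {c : C} {d : D} (hcd : (c, d) ∈ K) :
    ((c, (1 : D)) : C × D) ∈ K := by
  have h1 : ((c, d) : C × D) ^ Nat.card D ∈ K := pow_mem hcd _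
  have h2 : ((c, d) : C × D) ^ Nat.card D = (c ^ Nat.card D, 1) := by
    ext <;> simp [pow_card_eq_one']
  rw [h2] at h1
  have h3 := zpow_mem h1 ((Nat.card C).gcdB (Nat.card D))
  have h5 : (c ^ Nat.card D) ^ ((Nat.card C).gcdB (Nat.card D)) = c := by
    have := (powCoprime h).symm_apply_apply c
    simpa [powCoprime] using this
  have h4 : ((c ^ Nat.card D, (1 : D)) : C × D) ^ ((Nat.card C).gcdB (Nat.card D)) = (c, 1) := by
    ext
    · simpa using h5
    · simp
  rwa [h4] at h3

lemma aux_mem_right [Finite C] [Finite D] (h : Nat.Coprime (Nat.card C) (Nat.card D))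
    {K : Subgroup (C × D)} {c : C} {d : D} (hcd : (c, d) ∈ K) :
    (((1 : C), d) : C × D) ∈ K := by
  have h1 : ((c, d) : C × D) ^ Nat.card C ∈ K := pow_mem hcd _
  have h2 : ((c, d) : C × D) ^ Nat.card C = (1, d ^ Nat.card C) := by
    ext <;> simp [pow_card_eq_one']
  rw [h2] at h1
  have h3 := zpow_mem h1 ((Nat.card D).gcdB (Nat.card C))
  have h5 : (d ^ Nat.card C) ^ ((Nat.card D).gcdB (Nat.card C)) = d := by
    have := (powCoprime h.symm).symm_apply_apply d
    simpa [powCoprime] using this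
  have h4 : (((1 : C), d ^ Nat.card C) : C × D) ^ ((Nat.card D).gcdB (Nat.card C)) = (1, d) := by
    ext
    · simp
    · simpa using h5
  rwa [h4] at h3

lemma prod_decomp [Finite C] [Finite D] (h : Nat.Coprime (Nat.card C) (Nat.card D))
    (K : Subgroup (C × D)) :
    K = (K.map (MonoidHom.fst C D)).prod (K.map (MonoidHom.snd C D)) := by
  apply le_antisymm
  · intro x hx
    exact ⟨⟨x, hx, rfl⟩, ⟨x, hx, rfl⟩⟩
  · rintro ⟨c, d⟩ ⟨hc, hd⟩
    simp only [Subgroup.mem_map, MonoidHom.coe_fst, MonoidHom.coe_snd] at hc hd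
    obtain ⟨⟨c₁, d₀⟩, hk1, hc1⟩ := hc
    obtain ⟨⟨c₀, d₁⟩, hk2, hd1⟩ := hd
    subst hc1; subst hd1
    have hl := aux_mem_left h hk1
    have hr := aux_mem_right h hk2
    have := mul_mem hl hr
    simpa using this

lemma map_fst_prod (X : Subgroup C) (Y : Subgroup D) :
    (X.prod Y).map (MonoidHom.fst C D) = X := by
  ext c
  simp only [Subgroup.mem_map, MonoidHom.coe_fst, Subgroup.mem_prod, Prod.exists]
  constructor
  · rintro ⟨a, b, ⟨ha, _⟩, rfl⟩; exact ha
  · intro hc; exact ⟨c, 1, ⟨hc, one_mem Y⟩, rfl⟩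

lemma map_snd_prod (X : Subgroup C) (Y : Subgroup D) :
    (X.prod Y).map (MonoidHom.snd C D) = Y := by
  ext d
  simp only [Subgroup.mem_map, MonoidHom.coe_snd, Subgroup.mem_prod, Prod.exists]
  constructor
  · rintro ⟨a, b, ⟨_, hb⟩, rfl⟩; exact hb
  · intro hd; exact ⟨1, d, ⟨one_mem X, hd⟩, rfl⟩

/-- Subgroups of a product of groups of coprime order split. -/
noncomputable def subEquiv [Finite C] [Finite D]
    (h : Nat.Coprime (Nat.card C) (Nat.card D)) :
    Subgroup (C × D) ≃ Subgroup C × Subgroup D where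
  toFun K := (K.map (MonoidHom.fst C D), K.map (MonoidHom.snd C D))
  invFun P := P.1.prod P.2
  left_inv K := (prod_decomp h K).symm
  right_inv P := by simp [map_fst_prod, map_snd_prod]

lemma foldl_aux :
    ∀ (n : ℕ) (f : Fin n → Subgroup C) (g : Fin n → Subgroup D)
      (X : Subgroup C) (Y : Subgroup D),
      Fin.foldl n (fun A i => ⁅A, (f i).prod (g i)⁆) (X.prod Y) =
        (Fin.foldl n (fun A i => ⁅A, f i⁆) X).prod (Fin.foldl n (fun A i => ⁅A, g i⁆) Y)
  | 0, _, _, _, _ => by simp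
  | n + 1, f, g, X, Y => by
    rw [Fin.foldl_succ, Fin.foldl_succ, Fin.foldl_succ,
      Subgroup.commutator_prod_prod]
    exact foldl_aux n _ _ _ _

lemma itCommS_prod (n : ℕ) (X : Fin (n + 1) → Subgroup C) (Y : Fin (n + 1) → Subgroup D) :
    itCommS n (fun i => (X i).prod (Y i)) = (itCommS n X).prod (itCommS n Y) := by
  unfold itCommS
  exact foldl_aux n _ _ _ _

lemma snoc_prod (n : ℕ) (P : Fin n → Subgroup C) (Q : Fin n → Subgroup D)
    (P' : Subgroup C) (Q' : Subgroup D) :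
    (Fin.snoc (fun i => (P i).prod (Q i)) (P'.prod Q') : Fin (n + 1) → Subgroup (C × D)) =
      fun j => ((Fin.snoc P P' : Fin (n + 1) → _) j).prod ((Fin.snoc Q Q' : Fin (n + 1) → _) j) := by
  funext j
  refine Fin.lastCases ?_ ?_ j <;> simp

end Aux

theorem ssdRel_prod_of_coprime (C D : Type*) [Group C] [Group D]
    [Finite C] [Finite D] (h : Nat.Coprime (Nat.card C) (Nat.card D))
    (A : Subgroup C) (B : Subgroup D) (n : ℕ) (hn : 1 ≤ n) :
    ssdRel n (A.prod B) = ssdRel n A * ssdRel n B := by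
  classical
  set e : Subgroup (C × D) ≃ Subgroup C × Subgroup D := subEquiv h with he
  -- subtype equivalence for subgroups below `A.prod B`
  have hle : ∀ K : Subgroup (C × D),
      K ≤ A.prod B ↔ (e K).1 ≤ A ∧ (e K).2 ≤ B := fun K => Subgroup.le_prod_iff
  let eSub : {X : Subgroup (C × D) // X ≤ A.prod B} ≃
      {X : Subgroup C // X ≤ A} × {Y : Subgroup D // Y ≤ B} :=
    (Equiv.subtypeEquiv e hle).trans (Equiv.subtypeProdEquivProd)
  -- ambient equivalence for the numerator data
  let big : (Fin n → {X : Subgroup (C × D) // X ≤ A.prod B}) × Subgroup (C × D) ≃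
      ((Fin n → {X : Subgroup C // X ≤ A}) × Subgroup C) ×
        ((Fin n → {Y : Subgroup D // Y ≤ B}) × Subgroup D) :=
    (Equiv.prodCongr
      ((Equiv.arrowCongr (Equiv.refl (Fin n)) eSub).trans
        (Equiv.arrowProdEquivProdArrow _ _ _)) e).trans
      (Equiv.prodProdProdComm _ _ _ _)
  -- the condition transfers
  have hcond : ∀ p : (Fin n → {X : Subgroup (C × D) // X ≤ A.prod B}) × Subgroup (C × D),
      (itCommS n (Fin.snoc (fun i => ((p.1 i : Subgroup (C × D)))) p.2) = ⊥) ↔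
      (itCommS n (Fin.snoc (fun i => (((big p).1.1 i : Subgroup C))) (big p).1.2) = ⊥ ∧
       itCommS n (Fin.snoc (fun i => (((big p).2.1 i : Subgroup D))) (big p).2.2) = ⊥) := by
    intro p
    have h1 : (fun i => ((p.1 i : Subgroup (C × D)))) =
        fun i => (((p.1 i : Subgroup (C × D)).map (MonoidHom.fst C D)).prod
          ((p.1 i : Subgroup (C × D)).map (MonoidHom.snd C D))) := by
      funext i; exact prod_decomp h _
    have h2 : p.2 = (p.2.map (MonoidHom.fst C D)).prod (p.2.map (MonoidHom.snd C D)) :=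
      prod_decomp h _
    have hb1 : (fun i => (((big p).1.1 i : Subgroup C))) =
        fun i => (p.1 i : Subgroup (C × D)).map (MonoidHom.fst C D) := rfl
    have hb2 : (fun i => (((big p).2.1 i : Subgroup D))) =
        fun i => (p.1 i : Subgroup (C × D)).map (MonoidHom.snd C D) := rfl
    have hb3 : (big p).1.2 = p.2.map (MonoidHom.fst C D) := rfl
    have hb4 : (big p).2.2 = p.2.map (MonoidHom.snd C D) := rfl
    rw [hb1, hb2, hb3, hb4]
    conv_lhs => rw [h1, h2, snoc_prod, itCommS_prod, Subgroup.prod_eq_bot_iff]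
  -- equivalence of numerator subtypes
  let numEquiv : {p : (Fin n → {X : Subgroup (C × D) // X ≤ A.prod B}) × Subgroup (C × D) //
      itCommS n (Fin.snoc (fun i => ((p.1 i : Subgroup (C × D)))) p.2) = ⊥} ≃
      {p : (Fin n → {X : Subgroup C // X ≤ A}) × Subgroup C //
        itCommS n (Fin.snoc (fun i => ((p.1 i : Subgroup C))) p.2) = ⊥} ×
      {p : (Fin n → {Y : Subgroup D // Y ≤ B}) × Subgroup D //
        itCommS n (Fin.snoc (fun i => ((p.1 i : Subgroup D))) p.2) = ⊥} :=
    (Equiv.subtypeEquiv big hcond).trans Equiv.subtypeProdEquivProd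
  have hnum : (Nat.card {p : (Fin n → {X : Subgroup (C × D) // X ≤ A.prod B}) ×
        Subgroup (C × D) //
        itCommS n (Fin.snoc (fun i => ((p.1 i : Subgroup (C × D)))) p.2) = ⊥} : ℝ) =
      (Nat.card {p : (Fin n → {X : Subgroup C // X ≤ A}) × Subgroup C //
        itCommS n (Fin.snoc (fun i => ((p.1 i : Subgroup C))) p.2) = ⊥} : ℝ) *
      (Nat.card {p : (Fin n → {Y : Subgroup D // Y ≤ B}) × Subgroup D //
        itCommS n (Fin.snoc (fun i => ((p.1 i : Subgroup D))) p.2) = ⊥} : ℝ) := by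
    rw [Nat.card_congr numEquiv, Nat.card_prod]
    push_cast
    ring
  have hS : (Nat.card {X : Subgroup (C × D) // X ≤ A.prod B} : ℝ) =
      (Nat.card {X : Subgroup C // X ≤ A} : ℝ) * (Nat.card {Y : Subgroup D // Y ≤ B} : ℝ) := by
    rw [Nat.card_congr eSub, Nat.card_prod]
    push_cast
    ring
  have hG : (Nat.card (Subgroup (C × D)) : ℝ) =
      (Nat.card (Subgroup C) : ℝ) * (Nat.card (Subgroup D) : ℝ) := by
    rw [Nat.card_congr e, Nat.card_prod]
    push_cast
    ring
  unfold ssdRel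
  rw [hnum, hS, hG, mul_pow]
  rw [show (Nat.card {X : Subgroup C // X ≤ A} : ℝ) ^ n *
      (Nat.card {Y : Subgroup D // Y ≤ B} : ℝ) ^ n *
      ((Nat.card (Subgroup C) : ℝ) * (Nat.card (Subgroup D) : ℝ)) =
      ((Nat.card {X : Subgroup C // X ≤ A} : ℝ) ^ n * (Nat.card (Subgroup C) : ℝ)) *
      ((Nat.card {Y : Subgroup D // Y ≤ B} : ℝ) ^ n * (Nat.card (Subgroup D) : ℝ)) by ring]
  rw [mul_div_mul_comm]
end

section
/- For the dihedral group D_{2n} of order 2n (n ≥ 1), the total number of subgroups is |L(D_{2n})| = σ(n) + τ(n), where σ(n) is the sum of the divisors of n and τ(n) is the number of divisors of n. -/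
/-!
A subgroup `H` of `D_{2n}` is determined by its rotations `A = {i | r i ∈ H}`, a subgroup of
`ZMod n`, together with `{i | sr i ∈ H}`, which is empty or a single coset of `A` because
`sr j * sr i = r (i - j)`. Since `ZMod n` has exactly one subgroup of each order `d ∣ n`, and it
has `n / d` cosets, the count is `∑ d ∣ n, (n / d + 1) = σ(n) + τ(n)`.
-/

namespace IsAddCyclic

variable {G : Type*} [AddCommGroup G] [IsAddCyclic G] [Finite G]

theorem addSubgroup_eq_ker_nsmul_card (H : AddSubgroup G) :
    H = (nsmulAddMonoidHom (Nat.card H) : G →+ G).ker := by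
  refine AddSubgroup.eq_of_le_of_card_ge (fun x hx => ?_) ?_
  · exact congrArg Subtype.val (card_nsmul_eq_zero' (x := (⟨x, hx⟩ : H)))
  · rw [card_nsmulAddMonoidHom_ker, Nat.gcd_eq_right H.card_addSubgroup_dvd_card]

theorem card_addSubgroup_injective : Function.Injective fun H : AddSubgroup G => Nat.card H :=
  fun H K (h : Nat.card H = Nat.card K) => by
    rw [addSubgroup_eq_ker_nsmul_card H, addSubgroup_eq_ker_nsmul_card K, h]

theorem exists_addSubgroup_card_eq {d : ℕ} (hd : d ∣ Nat.card G) :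
    ∃ H : AddSubgroup G, Nat.card H = d :=
  ⟨(nsmulAddMonoidHom d : G →+ G).ker, by rw [card_nsmulAddMonoidHom_ker, Nat.gcd_eq_right hd]⟩

variable (G) in
noncomputable def addSubgroupEquivDivisors : AddSubgroup G ≃ (Nat.card G).divisors :=
  Equiv.ofBijective
    (fun H => ⟨Nat.card H, Nat.mem_divisors.mpr ⟨H.card_addSubgroup_dvd_card, Nat.card_pos.ne'⟩⟩)
    ⟨fun _ _ h => card_addSubgroup_injective (congrArg Subtype.val h), fun ⟨_, hd⟩ =>
      (exists_addSubgroup_card_eq (Nat.mem_divisors.mp hd).1).imp fun _ h => Subtype.ext h⟩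

theorem sum_addSubgroup_eq_sum_divisors [Fintype (AddSubgroup G)] {M : Type*} [AddCommMonoid M]
    (f : ℕ → M) : ∑ H : AddSubgroup G, f (Nat.card H) = ∑ d ∈ (Nat.card G).divisors, f d := by
  rw [← Finset.sum_coe_sort (Nat.card G).divisors f]
  exact Fintype.sum_equiv (addSubgroupEquivDivisors G) _ _ fun _ => rfl

end IsAddCyclic

namespace DihedralGroup

variable {n : ℕ}

def subgroupOfCoset (A : AddSubgroup (ZMod n)) (c : Option (ZMod n ⧸ A)) :
    Subgroup (DihedralGroup n) where
  carrier := {g | match g with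
    | r i => i ∈ A
    | sr i => c = some (i : ZMod n ⧸ A)}
  one_mem' := A.zero_mem
  mul_mem' := by
    rintro (i | i) (j | j) hi hj
    · exact A.add_mem hi hj
    · show c = some ((j - i : ZMod n) : ZMod n ⧸ A)
      rw [hj, QuotientAddGroup.mk_sub, (QuotientAddGroup.eq_zero_iff i).2 hi, sub_zero]
    · show c = some ((i + j : ZMod n) : ZMod n ⧸ A)
      rw [hi, QuotientAddGroup.mk_add, (QuotientAddGroup.eq_zero_iff j).2 hj, add_zero]
    · show j - i ∈ A
      rw [← QuotientAddGroup.eq_iff_sub_mem]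
      exact Option.some_injective _ (hj.symm.trans hi)
  inv_mem' := by
    rintro (i | i) hi
    · exact A.neg_mem hi
    · exact hi

variable {A : AddSubgroup (ZMod n)} {c : Option (ZMod n ⧸ A)} {i : ZMod n}

@[simp]
theorem sr_mem_subgroupOfCoset : sr i ∈ subgroupOfCoset A c ↔ c = some (i : ZMod n ⧸ A) := Iff.rfl

def rotations (H : Subgroup (DihedralGroup n)) : AddSubgroup (ZMod n) where
  carrier := {i | r i ∈ H}
  zero_mem' := H.one_mem
  add_mem' ha hb := H.mul_mem ha hb
  neg_mem' ha := H.inv_mem ha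

@[simp]
theorem mem_rotations {H : Subgroup (DihedralGroup n)} : i ∈ rotations H ↔ r i ∈ H := Iff.rfl

theorem sr_mem_iff_of_sr_mem {H : Subgroup (DihedralGroup n)} {j : ZMod n} (hj : sr j ∈ H) :
    sr i ∈ H ↔ (i : ZMod n ⧸ rotations H) = j := by
  rw [QuotientAddGroup.eq_iff_sub_mem, mem_rotations, ← sr_mul_sr, H.mul_mem_cancel_left hj]

open scoped Classical in
noncomputable def reflectionCoset (H : Subgroup (DihedralGroup n)) :
    Option (ZMod n ⧸ rotations H) :=
  if h : ∃ j, sr j ∈ H then some h.choose else none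

theorem reflectionCoset_subgroupOfCoset :
    reflectionCoset (subgroupOfCoset A c) = c := by
  classical
  rcases c with _ | q
  · refine dif_neg ?_
    rintro ⟨j, hj⟩
    exact Option.some_ne_none _ (sr_mem_subgroupOfCoset.mp hj).symm
  · have h : ∃ j, sr j ∈ subgroupOfCoset A (some q) :=
      ⟨q.out, sr_mem_subgroupOfCoset.mpr (congrArg some q.out_eq.symm)⟩
    rw [reflectionCoset, dif_pos h]
    exact (sr_mem_subgroupOfCoset.mp h.choose_spec).symm

theorem subgroupOfCoset_rotations_reflectionCoset (H : Subgroup (DihedralGroup n)) :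
    subgroupOfCoset (rotations H) (reflectionCoset H) = H := by
  classical
  ext (i | i)
  · exact Iff.rfl
  · by_cases h : ∃ j, sr j ∈ H
    · rw [sr_mem_subgroupOfCoset, reflectionCoset, dif_pos h, Option.some_inj,
        sr_mem_iff_of_sr_mem h.choose_spec, eq_comm]
    · simp only [sr_mem_subgroupOfCoset, reflectionCoset, dif_neg h, reduceCtorEq, false_iff]
      exact fun hi => h ⟨i, hi⟩

noncomputable def subgroupEquiv :
    (Σ A : AddSubgroup (ZMod n), Option (ZMod n ⧸ A)) ≃ Subgroup (DihedralGroup n) where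
  toFun p := subgroupOfCoset p.1 p.2
  invFun H := ⟨rotations H, reflectionCoset H⟩
  left_inv _ := Sigma.ext rfl (heq_of_eq reflectionCoset_subgroupOfCoset)
  right_inv := subgroupOfCoset_rotations_reflectionCoset

end DihedralGroup

theorem card_subgroup_dihedral (n : ℕ) (hn : 1 ≤ n) :
    Nat.card (Subgroup (DihedralGroup n)) =
      (∑ d ∈ n.divisors, d) + n.divisors.card := by
  have : NeZero n := ⟨by omega⟩
  let := Fintype.ofFinite (AddSubgroup (ZMod n))
  have card_option_quotient (A : AddSubgroup (ZMod n)) :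
      Nat.card (Option (ZMod n ⧸ A)) = n / Nat.card A + 1 := by
    rw [Finite.card_option, ← AddSubgroup.index_eq_card,
      Nat.eq_div_of_mul_eq_left Nat.card_pos.ne' (A.index_mul_card.trans (Nat.card_zmod n))]
  calc Nat.card (Subgroup (DihedralGroup n))
      = Nat.card (Σ A : AddSubgroup (ZMod n), Option (ZMod n ⧸ A)) :=
        (Nat.card_congr DihedralGroup.subgroupEquiv).symm
    _ = ∑ A : AddSubgroup (ZMod n), (n / Nat.card A + 1) := by
        simp only [Nat.card_sigma, card_option_quotient]
    _ = ∑ d ∈ n.divisors, (n / d + 1) := by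
        rw [IsAddCyclic.sum_addSubgroup_eq_sum_divisors (fun d => n / d + 1), Nat.card_zmod]
    _ = (∑ d ∈ n.divisors, d) + n.divisors.card := by
        rw [Finset.sum_add_distrib, ← Finset.card_eq_sum_ones]
        exact congrArg (· + _) (Nat.sum_div_divisors n id)
end
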